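/- arXiv:2512.21096 — 3 statements merged into one kernel-verified Lean document; each statement's English description precedes it below -/
import Mathlib

section
/- The finite hyperbolic Chebyshev constant of the closed disk of radius ρ < 1 centered at the origin equals ρ for every number of points q ≥ 1; in particular the hyperbolic Chebyshev constant τ(D̄_ρ) = ρ. -/
noncomputable def pseudoHyp (z μ : ℂ) : ℝ := ‖(z - μ) / (1 - (starRingEnd ℂ) μ * z)‖

/-- The finite hyperbolic Chebyshev constant of a closed set `D ⊆ 𝔻`:
`τ_q(D) = min_{μ ∈ D^q} max_{z ∈ D} (∏_k [z, μ_k]_h)^{1/q}`. -/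
noncomputable def finChebyshev (D : Set ℂ) (q : ℕ) : ℝ :=
  sInf { M : ℝ | ∃ μ : Fin q → ℂ, (∀ k, μ k ∈ D) ∧
    M = sSup { s : ℝ | ∃ z ∈ D, s = (∏ k, pseudoHyp z (μ k)) ^ ((1 : ℝ) / q) } }

/-! The centre configuration `μ = 0` gives `∏ [z, 0]_h = ‖z‖ ^ q ≤ ρ ^ q` on the disk. Conversely, for any
`μ_1, …, μ_q` in the disk, `f z = ∏ (ρ² - μ̄_k z) / (1 - μ̄_k z)` is holomorphic near the disk with
`|f 0| = ρ ^ (2q)`, while on the circle `|z| = ρ` the identity `ρ² - μ̄ z = z · conj (z - μ)` gives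
`|f z| = ρ ^ q ∏ [z, μ_k]_h`; by the maximum modulus principle the product is at least `ρ ^ q` somewhere
on the circle. -/

open Metric Finset ComplexConjugate

lemma pseudoHyp_nonneg (z μ : ℂ) : 0 ≤ pseudoHyp z μ := norm_nonneg _

@[simp]
lemma pseudoHyp_zero_right (z : ℂ) : pseudoHyp z 0 = ‖z‖ := by
  simp [pseudoHyp]

lemma normSq_one_sub_conj_mul_sub_normSq_sub (z μ : ℂ) :
    Complex.normSq (1 - conj μ * z) - Complex.normSq (z - μ) =
      (1 - Complex.normSq z) * (1 - Complex.normSq μ) := by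
  simp only [Complex.normSq_apply, Complex.sub_re, Complex.sub_im, Complex.mul_re,
    Complex.mul_im, Complex.conj_re, Complex.conj_im, Complex.one_re, Complex.one_im]
  ring

lemma pseudoHyp_le_one {z μ : ℂ} (hz : ‖z‖ ≤ 1) (hμ : ‖μ‖ ≤ 1) : pseudoHyp z μ ≤ 1 := by
  rw [pseudoHyp, norm_div]
  refine div_le_one_of_le₀ ?_ (norm_nonneg _)
  have hsq : ‖z - μ‖ ^ 2 ≤ ‖1 - conj μ * z‖ ^ 2 := by
    have := normSq_one_sub_conj_mul_sub_normSq_sub z μ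
    rw [Complex.normSq_eq_norm_sq, Complex.normSq_eq_norm_sq, Complex.normSq_eq_norm_sq,
      Complex.normSq_eq_norm_sq] at this
    nlinarith [mul_nonneg (sub_nonneg.2 (pow_le_one₀ (norm_nonneg z) hz (n := 2)))
      (sub_nonneg.2 (pow_le_one₀ (norm_nonneg μ) hμ (n := 2)))]
  exact pow_le_pow_iff_left₀ (norm_nonneg _) (norm_nonneg _) two_ne_zero |>.1 hsq

lemma one_sub_conj_mul_ne_zero {z μ : ℂ} (hz : ‖z‖ ≤ 1) (hμ : ‖μ‖ < 1) :
    1 - conj μ * z ≠ 0 := by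
  rw [sub_ne_zero]
  refine fun h => (?_ : ‖conj μ * z‖ < 1).ne (by rw [← h, norm_one])
  rw [norm_mul, Complex.norm_conj]
  exact mul_lt_one_of_nonneg_of_lt_one_left (norm_nonneg _) hμ hz

lemma norm_sq_sub_conj_mul_div_of_norm_eq {ρ : ℝ} {z : ℂ} (hz : ‖z‖ = ρ) (μ : ℂ) :
    ‖((ρ : ℂ) ^ 2 - conj μ * z) / (1 - conj μ * z)‖ = ρ * pseudoHyp z μ := by
  have hzz : z * conj z = (ρ : ℂ) ^ 2 := by
    rw [Complex.mul_conj, Complex.normSq_eq_norm_sq, hz]; push_cast; rfl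
  have : (ρ : ℂ) ^ 2 - conj μ * z = z * conj (z - μ) := by
    rw [map_sub, mul_sub, hzz]; ring
  rw [this, pseudoHyp, norm_div, norm_div, norm_mul, Complex.norm_conj, hz, mul_div_assoc]

lemma exists_norm_eq_pow_le_prod_pseudoHyp {ι : Type*} [Fintype ι] {ρ : ℝ} (hρ0 : 0 < ρ)
    (hρ1 : ρ ≤ 1) {μ : ι → ℂ} (hμ : ∀ k, ‖μ k‖ < 1) :
    ∃ z : ℂ, ‖z‖ = ρ ∧ ρ ^ Fintype.card ι ≤ ∏ k, pseudoHyp z (μ k) := by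
  set f : ℂ → ℂ := fun z => ∏ k, ((ρ : ℂ) ^ 2 - conj (μ k) * z) / (1 - conj (μ k) * z)
  have hcl : closure (ball (0 : ℂ) ρ) = closedBall 0 ρ := closure_ball 0 hρ0.ne'
  have hf : DiffContOnCl ℂ f (ball 0 ρ) := by
    refine DifferentiableOn.diffContOnCl (hcl ▸ ?_)
    refine DifferentiableOn.fun_finsetProd fun k _ => ?_
    refine DifferentiableOn.div (by fun_prop) (by fun_prop) fun z hz => ?_
    exact one_sub_conj_mul_ne_zero ((mem_closedBall_zero_iff.1 hz).trans hρ1) (hμ k)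
  obtain ⟨z, hz, hmax⟩ := Complex.exists_mem_frontier_isMaxOn_norm isBounded_ball
    ⟨0, mem_ball_self hρ0⟩ hf
  rw [frontier_ball 0 hρ0.ne', mem_sphere_zero_iff_norm] at hz
  have hf0 : ‖f 0‖ = ρ ^ Fintype.card ι * ρ ^ Fintype.card ι := by
    simp [f, norm_pow, abs_of_pos hρ0, ← pow_mul, ← pow_add, two_mul]
  have hfz : ‖f z‖ = ρ ^ Fintype.card ι * ∏ k, pseudoHyp z (μ k) := by
    simp only [f, norm_prod, norm_sq_sub_conj_mul_div_of_norm_eq hz, prod_mul_distrib,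
      prod_const, card_univ]
  have hle : ‖f 0‖ ≤ ‖f z‖ := hmax (hcl ▸ mem_closedBall_self hρ0.le)
  rw [hf0, hfz] at hle
  exact ⟨z, hz, le_of_mul_le_mul_left hle (pow_pos hρ0 _)⟩

lemma finChebyshev_eq_of_forall_exists_le {D : Set ℂ} {q : ℕ} {c : ℝ} (hD : ∀ z ∈ D, ‖z‖ ≤ 1)
    (hopt : ∃ μ : Fin q → ℂ, (∀ k, μ k ∈ D) ∧
      ∀ z ∈ D, (∏ k, pseudoHyp z (μ k)) ^ ((1 : ℝ) / q) ≤ c)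
    (hlow : ∀ μ : Fin q → ℂ, (∀ k, μ k ∈ D) →
      ∃ z ∈ D, c ≤ (∏ k, pseudoHyp z (μ k)) ^ ((1 : ℝ) / q)) :
    finChebyshev D q = c := by
  have hsup (μ : Fin q → ℂ) (hμ : ∀ k, μ k ∈ D) :
      c ≤ sSup {s : ℝ | ∃ z ∈ D, s = (∏ k, pseudoHyp z (μ k)) ^ ((1 : ℝ) / q)} := by
    obtain ⟨z, hz, hc⟩ := hlow μ hμ
    refine hc.trans (le_csSup ⟨1, ?_⟩ ⟨z, hz, rfl⟩)
    rintro _ ⟨w, hw, rfl⟩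
    exact Real.rpow_le_one (prod_nonneg fun k _ => pseudoHyp_nonneg _ _)
      (prod_le_one (fun k _ => pseudoHyp_nonneg _ _)
        fun k _ => pseudoHyp_le_one (hD w hw) (hD _ (hμ k))) (by positivity)
  obtain ⟨μ₀, hμ₀, hle⟩ := hopt
  have hc : c = sSup {s : ℝ | ∃ z ∈ D, s = (∏ k, pseudoHyp z (μ₀ k)) ^ ((1 : ℝ) / q)} := by
    obtain ⟨z, hz, -⟩ := hlow μ₀ hμ₀
    refine le_antisymm (hsup μ₀ hμ₀) (csSup_le ⟨_, z, hz, rfl⟩ ?_)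
    rintro _ ⟨w, hw, rfl⟩
    exact hle w hw
  have hlower : c ∈ lowerBounds {M : ℝ | ∃ μ : Fin q → ℂ, (∀ k, μ k ∈ D) ∧
      M = sSup {s : ℝ | ∃ z ∈ D, s = (∏ k, pseudoHyp z (μ k)) ^ ((1 : ℝ) / q)}} := by
    rintro _ ⟨μ, hμ, rfl⟩
    exact hsup μ hμ
  exact le_antisymm (csInf_le ⟨c, hlower⟩ ⟨μ₀, hμ₀, hc⟩) (le_csInf ⟨c, μ₀, hμ₀, hc⟩ hlower)

theorem finChebyshev_closedBall (ρ : ℝ) (hρ0 : 0 < ρ) (hρ1 : ρ < 1) (q : ℕ) (hq : 1 ≤ q) :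
    finChebyshev {z : ℂ | ‖z‖ ≤ ρ} q = ρ := by
  have hq0 : q ≠ 0 := by omega
  refine finChebyshev_eq_of_forall_exists_le (fun z hz => le_trans hz hρ1.le)
    ⟨0, fun _ => by simpa using hρ0.le, fun z hz => ?_⟩ fun μ hμ => ?_
  · simp only [Pi.zero_apply, pseudoHyp_zero_right, prod_const, card_univ, Fintype.card_fin,
      one_div, Real.pow_rpow_inv_natCast (norm_nonneg z) hq0]
    exact hz
  · obtain ⟨z, hz, hle⟩ := exists_norm_eq_pow_le_prod_pseudoHyp hρ0 hρ1.le
      fun k => lt_of_le_of_lt (hμ k) hρ1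
    refine ⟨z, hz.le, ?_⟩
    rw [one_div, Real.le_rpow_inv_iff_of_pos hρ0.le (prod_nonneg fun k _ => pseudoHyp_nonneg _ _)
      (by positivity), Real.rpow_natCast]
    simpa using hle
end

section
/- Let λ ∈ 𝔻 and μ_1,...,μ_q ∈ 𝔻 be pairwise distinct and distinct from λ. Then the minimal squared H² approximation error of 1/(z-λ) by linear combinations of 1/(z-μ_k) satisfies: min over complex r_1,...,r_q of ‖1/(z-λ) - Σ_k r_k/(z-μ_k)‖₂² = (1/(1-|λ|²)) · ∏_{k=1}^q [λ,μ_k]_h², where the H² norm is the L² norm of coefficients of the power series in z^{-1} (equivalently, the L² norm over the unit circle). -/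
/-- The squared H² error `‖1/(z-λ) - Σ_k r_k/(z-μ_k)‖₂²`, computed as the ℓ² norm of
the coefficients of the expansion in powers of `z⁻¹`: coefficient `n` is `λⁿ - Σ_k r_k μ_kⁿ`. -/
noncomputable def h2SqError (q : ℕ) (lam : ℂ) (μ : Fin q → ℂ) (r : Fin q → ℂ) : ℝ :=
  ∑' n : ℕ, ‖lam ^ n - ∑ k, r k * μ k ^ n‖ ^ 2

open Finset ComplexConjugate
open scoped InnerProductSpace

section LeastSquares

variable {𝕜 E ι : Type*} [RCLike 𝕜] [NormedAddCommGroup E] [InnerProductSpace 𝕜 E] [Fintype ι]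
  {x : E} {v : ι → E} {c : ι → 𝕜}

theorem isLeast_norm_sub_sum_sq (h : ∀ i, ⟪v i, x - ∑ j, c j • v j⟫_𝕜 = 0) :
    IsLeast (Set.range fun r : ι → 𝕜 => ‖x - ∑ i, r i • v i‖ ^ 2) (‖x - ∑ i, c i • v i‖ ^ 2) := by
  refine ⟨⟨c, rfl⟩, ?_⟩
  rintro _ ⟨r, rfl⟩
  have hsplit : x - ∑ i, r i • v i = (x - ∑ i, c i • v i) + ∑ i, (c i - r i) • v i := by
    simp only [sub_smul, sum_sub_distrib]
    abel
  have horth : ⟪x - ∑ i, c i • v i, ∑ i, (c i - r i) • v i⟫_𝕜 = 0 := by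
    simp only [inner_sum, inner_smul_right, inner_eq_zero_symm.mp (h _), mul_zero, sum_const_zero]
  simp only [hsplit, sq, norm_add_sq_eq_norm_sq_add_norm_sq_of_inner_eq_zero _ _ horth]
  exact le_add_of_nonneg_right (mul_self_nonneg _)

theorem norm_sub_sum_sq_eq_re_inner (h : ∀ i, ⟪v i, x - ∑ j, c j • v j⟫_𝕜 = 0) :
    ‖x - ∑ i, c i • v i‖ ^ 2 = RCLike.re ⟪x, x - ∑ i, c i • v i⟫_𝕜 := by
  rw [← inner_self_eq_norm_sq (𝕜 := 𝕜)]
  conv_lhs => rw [inner_sub_left]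
  simp only [sum_inner, inner_smul_left, h, mul_zero, sum_const_zero, sub_zero]

end LeastSquares

section GeometricSequences

variable {𝕜 : Type*} [RCLike 𝕜]

theorem lp.norm_sq_eq_tsum {α : Type*} {E : α → Type*} [∀ i, NormedAddCommGroup (E i)]
    (f : lp E 2) : ‖f‖ ^ 2 = ∑' i, ‖f i‖ ^ 2 := by
  simpa using lp.norm_rpow_eq_tsum (p := 2) (by norm_num) f

theorem memℓp_geometric {a : 𝕜} (ha : ‖a‖ < 1) : Memℓp (fun n : ℕ => a ^ n) 2 := by
  rw [memℓp_gen_iff (by norm_num)]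
  have hsq : ‖a‖ ^ 2 < 1 := by nlinarith [norm_nonneg a]
  simpa [norm_pow, ← pow_mul, mul_comm] using
    summable_geometric_of_lt_one (sq_nonneg ‖a‖) hsq

def geomLp (a : 𝕜) (ha : ‖a‖ < 1) : lp (fun _ : ℕ => 𝕜) 2 := ⟨fun n => a ^ n, memℓp_geometric ha⟩

theorem inner_geomLp {a b : 𝕜} (ha : ‖a‖ < 1) (hb : ‖b‖ < 1) :
    ⟪geomLp a ha, geomLp b hb⟫_𝕜 = (1 - conj a * b)⁻¹ := by
  have hab : ‖conj a * b‖ < 1 := by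
    rw [norm_mul, RCLike.norm_conj]
    nlinarith [norm_nonneg a, norm_nonneg b]
  rw [lp.inner_eq_tsum, ← tsum_geometric_of_norm_lt_one hab]
  simp [geomLp, RCLike.inner_apply, mul_pow, mul_comm]

theorem inner_geomLp_sub_sum {ι : Type*} [Fintype ι] {a b : 𝕜} {μ : ι → 𝕜} (ha : ‖a‖ < 1)
    (hb : ‖b‖ < 1) (hμ : ∀ k, ‖μ k‖ < 1) (c : ι → 𝕜) :
    ⟪geomLp a ha, geomLp b hb - ∑ k, c k • geomLp (μ k) (hμ k)⟫_𝕜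
      = (1 - conj a * b)⁻¹ - ∑ k, c k * (1 - conj a * μ k)⁻¹ := by
  simp only [inner_sub_right, inner_sum, inner_smul_right, inner_geomLp]

end GeometricSequences

theorem h2SqError_eq_norm_sq {q : ℕ} {lam : ℂ} {μ : Fin q → ℂ} (hlam : ‖lam‖ < 1)
    (hμ : ∀ k, ‖μ k‖ < 1) (r : Fin q → ℂ) :
    h2SqError q lam μ r = ‖geomLp lam hlam - ∑ k, r k • geomLp (μ k) (hμ k)‖ ^ 2 := by
  rw [lp.norm_sq_eq_tsum, h2SqError]
  congr! with n
  simp only [lp.coeFn_sub, lp.coeFn_sum, lp.coeFn_smul, Pi.sub_apply, Finset.sum_apply,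
    Pi.smul_apply, smul_eq_mul]
  rfl

open Polynomial Lagrange

theorem Lagrange.eval_div_eval_nodal {F ι : Type*} [Field F] [DecidableEq ι] {s : Finset ι}
    {v : ι → F} {f : F[X]} (hvs : Set.InjOn v s) (hf : f.degree < #s) {x : F}
    (hx : ∀ i ∈ s, x ≠ v i) :
    f.eval x / (nodal s v).eval x = ∑ i ∈ s, nodalWeight s v i * (x - v i)⁻¹ * f.eval (v i) := by
  conv_lhs => rw [eq_interpolate hvs hf, eval_interpolate_not_at_node _ hx]
  exact mul_div_cancel_left₀ _ (eval_nodal_not_at_node hx)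

theorem Finset.prod_univ_erase_none {α M : Type*} [Fintype α] [DecidableEq α] [CommMonoid M]
    (f : Option α → M) : ∏ o ∈ univ.erase none, f o = ∏ a, f (some a) := by
  rw [← map_some_eraseNone, prod_map]
  congr
  ext
  simp

theorem one_sub_mul_ne_zero_of_norm_lt_one {R : Type*} [NormedRing R] [NormOneClass R] {a b : R}
    (ha : ‖a‖ < 1) (hb : ‖b‖ < 1) : 1 - a * b ≠ 0 := by
  refine sub_ne_zero.mpr fun h => ?_
  have : ‖a * b‖ < 1 :=
    (norm_mul_le a b).trans_lt (by nlinarith [norm_nonneg a, norm_nonneg b])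
  rw [← h, norm_one] at this
  exact lt_irrefl _ this

section Blaschke

variable {ι : Type*} [Fintype ι]

noncomputable def blaschke (μ : ι → ℂ) (z : ℂ) : ℂ := ∏ j, (z - μ j) / (1 - conj (μ j) * z)

theorem norm_blaschke (μ : ι → ℂ) (z : ℂ) : ‖blaschke μ z‖ = ∏ j, pseudoHyp z (μ j) :=
  norm_prod _ _

theorem blaschke_eq_zero (μ : ι → ℂ) (i : ι) : blaschke μ (μ i) = 0 :=
  prod_eq_zero (mem_univ i) (by simp)

theorem blaschke_conj (μ : ι → ℂ) (z : ℂ) :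
    blaschke (conj ∘ μ) (conj z) = conj (blaschke μ z) := by
  simp [blaschke, map_prod, mul_comm]

end Blaschke

section PartialFractions

variable {ι : Type*}

def lagrangeNodes (lam : ℂ) (μ : ι → ℂ) : Option ι → ℂ := fun o => o.elim lam μ

@[simp] theorem lagrangeNodes_none (lam : ℂ) (μ : ι → ℂ) : lagrangeNodes lam μ none = lam := rfl

@[simp] theorem lagrangeNodes_some (lam : ℂ) (μ : ι → ℂ) (k : ι) :
    lagrangeNodes lam μ (some k) = μ k := rfl

theorem lagrangeNodes_injective {lam : ℂ} {μ : ι → ℂ} (hμ : Function.Injective μ)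
    (hne : ∀ k, μ k ≠ lam) : Function.Injective (lagrangeNodes lam μ) := by
  rintro (_ | i) (_ | j) h <;> simp only [lagrangeNodes_none, lagrangeNodes_some] at h
  · rfl
  · exact absurd h.symm (hne j)
  · exact absurd h (hne i)
  · rw [hμ h]

variable [Fintype ι]

noncomputable def residualNumerator (lam : ℂ) (μ : ι → ℂ) : ℂ[X] :=
  C (blaschke μ lam) * ∏ j, (1 - C (conj (μ j)) * X)

theorem eval_residualNumerator (lam : ℂ) (μ : ι → ℂ) (z : ℂ) :
    (residualNumerator lam μ).eval z = blaschke μ lam * ∏ j, (1 - conj (μ j) * z) := by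
  simp [residualNumerator, eval_prod]

theorem degree_residualNumerator_lt (lam : ℂ) (μ : ι → ℂ) :
    (residualNumerator lam μ).degree < #(univ : Finset (Option ι)) := by
  have hnat : (residualNumerator lam μ).natDegree ≤ Fintype.card ι := by
    refine (natDegree_C_mul_le _ _).trans ((natDegree_prod_le _ _).trans ?_)
    simpa using sum_le_card_nsmul univ (fun j => (1 - C (conj (μ j)) * X : ℂ[X]).natDegree) 1
      fun j _ => by compute_degree
  rw [card_univ, Fintype.card_option]
  exact degree_le_natDegree.trans_lt (by exact_mod_cast Nat.lt_succ_of_le hnat)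

variable [DecidableEq ι]

/-- `-optCoeff lam μ k` is the residue at `μ k` of
`residualNumerator lam μ / nodal univ (lagrangeNodes lam μ)`. -/
noncomputable def optCoeff (lam : ℂ) (μ : ι → ℂ) (k : ι) : ℂ :=
  -(nodalWeight univ (lagrangeNodes lam μ) (some k) * (residualNumerator lam μ).eval (μ k))

theorem nodalWeight_none_mul_eval_residualNumerator {lam : ℂ} {μ : ι → ℂ} (hlam : ‖lam‖ < 1)
    (hμ : ∀ k, ‖μ k‖ < 1) (hne : ∀ k, μ k ≠ lam) :
    nodalWeight univ (lagrangeNodes lam μ) none * (residualNumerator lam μ).eval lam = 1 := by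
  rw [nodalWeight, prod_univ_erase_none, eval_residualNumerator, blaschke, ← mul_assoc,
    ← prod_mul_distrib, ← prod_mul_distrib]
  refine prod_eq_one fun j _ => ?_
  have h1 : lam - μ j ≠ 0 := sub_ne_zero.mpr (hne j).symm
  have h2 : 1 - lam * conj (μ j) ≠ 0 :=
    one_sub_mul_ne_zero_of_norm_lt_one hlam (by simpa using hμ j)
  simp only [lagrangeNodes_none, lagrangeNodes_some]
  field_simp

theorem inv_sub_sub_sum_optCoeff_mul_inv {lam : ℂ} {μ : ι → ℂ} (hlam : ‖lam‖ < 1)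
    (hμ : ∀ k, ‖μ k‖ < 1) (hinj : Function.Injective μ) (hne : ∀ k, μ k ≠ lam) {z : ℂ}
    (hz : ∀ o, z ≠ lagrangeNodes lam μ o) :
    (z - lam)⁻¹ - ∑ k, optCoeff lam μ k * (z - μ k)⁻¹
      = blaschke μ lam * (∏ j, (1 - conj (μ j) * z) / (z - μ j)) / (z - lam) := by
  have hpf := eval_div_eval_nodal (lagrangeNodes_injective hinj hne).injOn
    (degree_residualNumerator_lt lam μ) fun o _ => hz o
  rw [eval_residualNumerator, eval_nodal, Fintype.prod_option, Fintype.sum_option] at hpf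
  simp only [lagrangeNodes_none, lagrangeNodes_some] at hpf
  rw [prod_div_distrib, ← mul_div_assoc, div_div, mul_comm (∏ j, (z - μ j)), hpf,
    mul_right_comm, nodalWeight_none_mul_eval_residualNumerator hlam hμ hne, one_mul]
  simp only [optCoeff, neg_mul, sum_neg_distrib, sub_neg_eq_add]
  exact congrArg _ (sum_congr rfl fun k _ => by ring)

theorem inv_one_sub_sub_sum_optCoeff_mul_inv_of_ne_zero {lam : ℂ} {μ : ι → ℂ}
    (hlam : ‖lam‖ < 1) (hμ : ∀ k, ‖μ k‖ < 1) (hinj : Function.Injective μ)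
    (hne : ∀ k, μ k ≠ lam) {v : ℂ} (hv : ‖v‖ < 1) (hv0 : v ≠ 0) :
    (1 - v * lam)⁻¹ - ∑ k, optCoeff lam μ k * (1 - v * μ k)⁻¹
      = blaschke μ lam * blaschke (conj ∘ μ) v / (1 - v * lam) := by
  have inv_inv_sub (a : ℂ) : (v⁻¹ - a)⁻¹ = v * (1 - v * a)⁻¹ := by
    have : v⁻¹ - a = (1 - v * a) * v⁻¹ := by field_simp
    rw [this, mul_inv, inv_inv, mul_comm]
  have hz : ∀ o, v⁻¹ ≠ lagrangeNodes lam μ o := by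
    intro o h
    have h1 : 1 < ‖v⁻¹‖ := by
      rw [norm_inv]
      exact one_lt_inv_iff₀.mpr ⟨norm_pos_iff.mpr hv0, hv⟩
    rcases o with _ | k <;> simp only [lagrangeNodes_none, lagrangeNodes_some, h] at h1
    exacts [by linarith, by linarith [hμ k]]
  have hfac : ∀ j, (1 - conj (μ j) * v⁻¹) / (v⁻¹ - μ j) = (v - conj (μ j)) / (1 - μ j * v) := by
    intro j
    rw [← div_div_div_cancel_right₀ hv0 (v - conj (μ j))]
    congr 1 <;> field_simp
  have hzform := inv_sub_sub_sum_optCoeff_mul_inv hlam hμ hinj hne hz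
  simp only [inv_inv_sub, hfac, div_eq_mul_inv _ (v⁻¹ - lam)] at hzform
  simp only [mul_left_comm (optCoeff lam μ _) v, ← mul_sum] at hzform
  have hB : blaschke (conj ∘ μ) v = ∏ j, (v - conj (μ j)) / (1 - μ j * v) := by
    simp [blaschke]
  refine mul_left_cancel₀ hv0 ?_
  rw [hB]
  linear_combination hzform

theorem inv_one_sub_sub_sum_optCoeff_mul_inv {lam : ℂ} {μ : ι → ℂ} (hlam : ‖lam‖ < 1)
    (hμ : ∀ k, ‖μ k‖ < 1) (hinj : Function.Injective μ) (hne : ∀ k, μ k ≠ lam) {v : ℂ}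
    (hv : ‖v‖ < 1) :
    (1 - v * lam)⁻¹ - ∑ k, optCoeff lam μ k * (1 - v * μ k)⁻¹
      = blaschke μ lam * blaschke (conj ∘ μ) v / (1 - v * lam) := by
  rcases eq_or_ne v 0 with rfl | hv0
  · -- `v = 0` corresponds to `z = ∞`: extend the identity from the punctured disk by continuity.
    have hG : ContinuousAt
        (fun w : ℂ => (1 - w * lam)⁻¹ - ∑ k, optCoeff lam μ k * (1 - w * μ k)⁻¹) 0 := by
      fun_prop (disch := simp)
    have hΨ : ContinuousAt
        (fun w : ℂ => blaschke μ lam * blaschke (conj ∘ μ) w / (1 - w * lam)) 0 := by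
      simp only [blaschke]
      fun_prop (disch := simp)
    refine ((hG.eventuallyEq_nhds_iff_eventuallyEq_nhdsNE hΨ).mp ?_).eq_of_nhds
    filter_upwards [nhdsWithin_le_nhds (Metric.ball_mem_nhds 0 one_pos), self_mem_nhdsWithin]
      with w hw hw0
    exact inv_one_sub_sub_sum_optCoeff_mul_inv_of_ne_zero hlam hμ hinj hne (by simpa using hw) hw0
  · exact inv_one_sub_sub_sum_optCoeff_mul_inv_of_ne_zero hlam hμ hinj hne hv hv0

end PartialFractions

theorem h2_min_error_blaschke_general (q : ℕ) (lam : ℂ) (μ : Fin q → ℂ)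
    (hlam : ‖lam‖ < 1) (hμ : ∀ k, ‖μ k‖ < 1)
    (hdist : Function.Injective μ) (hne : ∀ k, μ k ≠ lam) :
    sInf { E : ℝ | ∃ r : Fin q → ℂ, E = h2SqError q lam μ r }
      = (1 / (1 - ‖lam‖ ^ 2)) * ∏ k, pseudoHyp lam (μ k) ^ 2 := by
  set e := fun k => geomLp (μ k) (hμ k)
  have hinner : ∀ (a : ℂ) (ha : ‖a‖ < 1),
      ⟪geomLp a ha, geomLp lam hlam - ∑ k, optCoeff lam μ k • e k⟫_ℂ
        = blaschke μ lam * blaschke (conj ∘ μ) (conj a) / (1 - conj a * lam) := fun a ha =>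
    (inner_geomLp_sub_sum ha hlam hμ _).trans
      (inv_one_sub_sub_sum_optCoeff_mul_inv hlam hμ hdist hne (by simpa using ha))
  have horth : ∀ k, ⟪e k, geomLp lam hlam - ∑ j, optCoeff lam μ j • e j⟫_ℂ = 0 := fun k => by
    rw [hinner, ← Function.comp_apply (f := conj), blaschke_eq_zero, mul_zero, zero_div]
  have hrange : {E | ∃ r : Fin q → ℂ, E = h2SqError q lam μ r}
      = Set.range fun r : Fin q → ℂ => ‖geomLp lam hlam - ∑ k, r k • e k‖ ^ 2 := by
    ext E
    simp [h2SqError_eq_norm_sq hlam hμ, eq_comm, e]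
  rw [hrange, (isLeast_norm_sub_sum_sq horth).csInf_eq, norm_sub_sum_sq_eq_re_inner horth,
    hinner, blaschke_conj, Complex.mul_conj', Complex.conj_mul', prod_pow, ← norm_blaschke,
    one_div_mul_eq_div]
  norm_cast

theorem h2_min_error_blaschke (q : ℕ) (hq : 1 ≤ q) (lam : ℂ) (μ : Fin q → ℂ)
    (hlam : ‖lam‖ < 1) (hμ : ∀ k, ‖μ k‖ < 1)
    (hdist : Function.Injective μ) (hne : ∀ k, μ k ≠ lam) :
    sInf { E : ℝ | ∃ r : Fin q → ℂ, E = h2SqError q lam μ r }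
      = (1 / (1 - ‖lam‖ ^ 2)) * ∏ k, pseudoHyp lam (μ k) ^ 2 :=
  h2_min_error_blaschke_general q lam μ hlam hμ hdist hne
end

section
/- Let G(z) = Σ_{j=1}^n R_j/(z-λ_j) with matrices R_j ∈ ℂ^{p×m} and distinct λ_j ∈ 𝔻, and let μ_1,...,μ_q ∈ 𝔻 be pairwise distinct with μ_k ≠ λ_j for all j,k. Then the minimal H₂ approximation error using the basis 1/(z-μ_k) satisfies min over Ř_1,...,Ř_q ∈ ℂ^{p×m} of ‖G - Σ_k Ř_k/(z-μ_k)‖₂ ≤ Σ_{j=1}^n (‖R_j‖/√(1-|λ_j|²)) · ∏_{k=1}^q [λ_j,μ_k]_h. -/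
/-!
A strictly proper `f(z) = Σ_{w ∈ P} a_w / (z - w)` with poles in the disc has `z⁻¹`-coefficients
`Σ_w a_w w^N`, so `‖f‖₂²` is the Gram form `Σ_{w,v} a_w conj a_v / (1 - w conj v)` of the Szegő
kernel. Multiplying `f` by the Blaschke factor `b_μ(z) = (1 - conj μ z) / (z - μ)`, which is
unimodular on the circle, keeps `f` of this shape (with the extra pole `μ`) and does not change its
norm. Starting from `1 / (z - λ)` and multiplying by `b_{μ_k}(z) / b_{μ_k}(λ)` for every `k` gives
`1/(z - λ) - Σ_k r_k / (z - μ_k)` of norm `∏_k [λ, μ_k]_h / √(1 - |λ|²)`, because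
`|b_μ(λ)| = 1 / [λ, μ]_h`. For matrix residues take `Ř_k = Σ_j r_{jk} R_j` and apply the
Minkowski inequality in `ℓ²`.
-/

attribute [local instance] Matrix.frobeniusNormedAddCommGroup

/-- The squared H₂ error of approximating `G(z) = Σ_j R_j/(z-λ_j)` by
`Σ_k Ř_k/(z-μ_k)`, computed coefficient-wise from the expansions in powers of `z⁻¹`. -/
noncomputable def h2SqErrorMat (p m n q : ℕ) (R : Fin n → Matrix (Fin p) (Fin m) ℂ)
    (lam : Fin n → ℂ) (μ : Fin q → ℂ) (Rc : Fin q → Matrix (Fin p) (Fin m) ℂ) : ℝ :=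
  ∑' N : ℕ, ‖(∑ j, lam j ^ N • R j) - ∑ k, μ k ^ N • Rc k‖ ^ 2

attribute [local instance] Matrix.frobeniusNormedSpace

open ComplexConjugate Finset

theorem sqrt_tsum_norm_sum_sq_le {ι E : Type*} [NormedAddCommGroup E] (s : Finset ι)
    (f : ι → ℕ → E) (hf : ∀ i, Summable fun N => ‖f i N‖ ^ 2) :
    √(∑' N, ‖∑ i ∈ s, f i N‖ ^ 2) ≤ ∑ i ∈ s, √(∑' N, ‖f i N‖ ^ 2) := by
  have norm_eq (g : lp (fun _ : ℕ => E) 2) : ‖g‖ = √(∑' N, ‖g N‖ ^ 2) := by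
    rw [lp.norm_eq_tsum_rpow (by norm_num), Real.sqrt_eq_rpow]
    norm_num
  let F (i : ι) : lp (fun _ : ℕ => E) 2 := ⟨f i, memℓp_gen (by simpa using hf i)⟩
  calc √(∑' N, ‖∑ i ∈ s, f i N‖ ^ 2) = ‖∑ i ∈ s, F i‖ := by
        rw [norm_eq, lp.coeFn_sum]
        simp [F, Finset.sum_apply]
    _ ≤ ∑ i ∈ s, ‖F i‖ := norm_sum_le _ _
    _ = ∑ i ∈ s, √(∑' N, ‖f i N‖ ^ 2) := by simp only [norm_eq]; rfl

-- `a : ℂ → ℂ` stands for `f(z) = Σ_{w ∈ P} a w / (z - w)`, so that `szegoGram P a = ‖f‖₂²`,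
-- and `blaschkeMul μ P a` stands for `blaschkeFactor μ z * f(z)`: the residue of
-- `blaschkeFactor μ z / (z - v)` at `v` is `blaschkeFactor μ v`, at `μ` it is
-- `blaschkeResidue μ v`.
noncomputable def szegoKernel (w v : ℂ) : ℂ := (1 - w * conj v)⁻¹

noncomputable def blaschkeFactor (μ z : ℂ) : ℂ := (1 - conj μ * z) / (z - μ)

noncomputable def blaschkeResidue (μ v : ℂ) : ℂ := (1 - conj μ * μ) / (μ - v)

noncomputable def szegoGram (P : Finset ℂ) (a : ℂ → ℂ) : ℂ :=
  ∑ w ∈ P, ∑ v ∈ P, a w * conj (a v) * szegoKernel w v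

noncomputable def blaschkeMul (μ : ℂ) (P : Finset ℂ) (a : ℂ → ℂ) : ℂ → ℂ :=
  Function.update (fun w => a w * blaschkeFactor μ w) μ (∑ v ∈ P, a v * blaschkeResidue μ v)

theorem one_sub_mul_conj_ne_zero {w v : ℂ} (hw : ‖w‖ < 1) (hv : ‖v‖ < 1) :
    1 - w * conj v ≠ 0 := by
  have : ‖w * conj v‖ < 1 := by
    rw [norm_mul, Complex.norm_conj]
    nlinarith [norm_nonneg w, norm_nonneg v]
  intro h
  rw [← sub_eq_zero.mp h, norm_one] at this
  exact this.false

-- Multiplication by `blaschkeFactor μ` preserves the inner products of the Cauchy kernels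
-- `1 / (z - w)` and `1 / (z - v)`.
theorem blaschke_szegoKernel_identity {μ w v : ℂ} (hμ : ‖μ‖ < 1) (hw : ‖w‖ < 1)
    (hv : ‖v‖ < 1) (hwμ : w ≠ μ) (hvμ : v ≠ μ) :
    blaschkeFactor μ w * conj (blaschkeFactor μ v) * szegoKernel w v
      + blaschkeFactor μ w * conj (blaschkeResidue μ v) * szegoKernel w μ
      + blaschkeResidue μ w * conj (blaschkeFactor μ v) * szegoKernel μ v
      + blaschkeResidue μ w * conj (blaschkeResidue μ v) * szegoKernel μ μ
      = szegoKernel w v := by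
  have hvμ' : conj v ≠ conj μ := (starRingEnd ℂ).injective.ne hvμ
  have := one_sub_mul_conj_ne_zero hw hv
  have := one_sub_mul_conj_ne_zero hμ hv
  have := one_sub_mul_conj_ne_zero hμ hμ
  have : 1 - conj μ * w ≠ 0 := by rw [mul_comm]; exact one_sub_mul_conj_ne_zero hw hμ
  have := sub_ne_zero.mpr hwμ
  have := sub_ne_zero.mpr hwμ.symm
  have := sub_ne_zero.mpr hvμ'
  have := sub_ne_zero.mpr hvμ'.symm
  simp only [blaschkeFactor, blaschkeResidue, szegoKernel, map_div₀, map_sub, map_mul, map_one,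
    Complex.conj_conj]
  field_simp
  ring

theorem hasSum_norm_sq_sum_mul_pow (P : Finset ℂ) (hP : ∀ w ∈ P, ‖w‖ < 1) (a : ℂ → ℂ) :
    HasSum (fun N => ‖∑ w ∈ P, a w * w ^ N‖ ^ 2) (szegoGram P a).re := by
  have hgeom : ∀ w ∈ P, ∀ v ∈ P, HasSum (fun N => a w * conj (a v) * (w * conj v) ^ N)
      (a w * conj (a v) * szegoKernel w v) := fun w hw v hv => by
    refine (hasSum_geometric_of_norm_lt_one ?_).mul_left (a w * conj (a v))
    rw [norm_mul, Complex.norm_conj]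
    nlinarith [norm_nonneg w, norm_nonneg v, hP w hw, hP v hv]
  refine Complex.hasSum_re (hasSum_sum fun w hw => hasSum_sum fun v hv => hgeom w hw v hv)
    |>.congr_fun fun N => ?_
  have hexpand : ∑ w ∈ P, ∑ v ∈ P, a w * conj (a v) * (w * conj v) ^ N
      = (∑ w ∈ P, a w * w ^ N) * conj (∑ w ∈ P, a w * w ^ N) := by
    rw [map_sum, sum_mul_sum]
    simp only [map_mul, map_pow]
    exact sum_congr rfl fun w _ => sum_congr rfl fun v _ => by ring
  rw [hexpand, Complex.mul_conj', ← Complex.ofReal_pow, Complex.ofReal_re]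

theorem szegoGram_smul (P : Finset ℂ) (c : ℂ) (a : ℂ → ℂ) :
    szegoGram P (c • a) = (‖c‖ : ℂ) ^ 2 * szegoGram P a := by
  simp only [szegoGram, mul_sum, Pi.smul_apply, smul_eq_mul, map_mul, ← Complex.mul_conj']
  exact sum_congr rfl fun w _ => sum_congr rfl fun v _ => by ring

theorem szegoGram_congr {P : Finset ℂ} {a b : ℂ → ℂ} (h : ∀ w ∈ P, a w = b w) :
    szegoGram P a = szegoGram P b :=
  sum_congr rfl fun w hw => sum_congr rfl fun v hv => by rw [h w hw, h v hv]

theorem szegoGram_insert {μ : ℂ} {P : Finset ℂ} (hμP : μ ∉ P) (a : ℂ → ℂ) :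
    szegoGram (insert μ P) a = a μ * conj (a μ) * szegoKernel μ μ
      + ∑ v ∈ P, a μ * conj (a v) * szegoKernel μ v
      + ∑ w ∈ P, a w * conj (a μ) * szegoKernel w μ + szegoGram P a := by
  simp only [szegoGram, sum_insert hμP, sum_add_distrib]
  ring

theorem szegoGram_blaschkeMul {μ : ℂ} (hμ : ‖μ‖ < 1) {P : Finset ℂ} (hP : ∀ w ∈ P, ‖w‖ < 1)
    (hμP : μ ∉ P) (a : ℂ → ℂ) :
    szegoGram (insert μ P) (blaschkeMul μ P a) = szegoGram P a := by
  set A := ∑ v ∈ P, a v * blaschkeResidue μ v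
  set b := fun w => a w * blaschkeFactor μ w
  have hne : ∀ w ∈ P, w ≠ μ := fun w hw h => hμP (h ▸ hw)
  have hval : ∀ w ∈ P, blaschkeMul μ P a w = b w := fun w hw =>
    Function.update_of_ne (hne w hw) ..
  have hFF : ∑ w ∈ P, ∑ v ∈ P, a w * conj (a v) *
      (blaschkeFactor μ w * conj (blaschkeFactor μ v) * szegoKernel w v) = szegoGram P b := by
    simp only [szegoGram, b, map_mul]
    exact sum_congr rfl fun w _ => sum_congr rfl fun v _ => by ring
  have hFR : ∑ w ∈ P, ∑ v ∈ P, a w * conj (a v) *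
      (blaschkeFactor μ w * conj (blaschkeResidue μ v) * szegoKernel w μ)
      = ∑ w ∈ P, b w * conj A * szegoKernel w μ := by
    simp only [b, A, map_sum, mul_sum, sum_mul, map_mul]
    exact sum_congr rfl fun w _ => sum_congr rfl fun v _ => by ring
  have hRF : ∑ w ∈ P, ∑ v ∈ P, a w * conj (a v) *
      (blaschkeResidue μ w * conj (blaschkeFactor μ v) * szegoKernel μ v)
      = ∑ v ∈ P, A * conj (b v) * szegoKernel μ v := by
    rw [sum_comm]
    simp only [b, A, sum_mul, map_mul]
    exact sum_congr rfl fun w _ => sum_congr rfl fun v _ => by ring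
  have hRR : ∑ w ∈ P, ∑ v ∈ P, a w * conj (a v) *
      (blaschkeResidue μ w * conj (blaschkeResidue μ v) * szegoKernel μ μ)
      = A * conj A * szegoKernel μ μ := by
    rw [map_sum, sum_mul_sum, sum_mul]
    simp only [sum_mul, map_mul]
    exact sum_congr rfl fun w _ => sum_congr rfl fun v _ => by ring
  have hkernel : szegoGram P a = ∑ w ∈ P, ∑ v ∈ P, a w * conj (a v) *
      (blaschkeFactor μ w * conj (blaschkeFactor μ v) * szegoKernel w v
        + blaschkeFactor μ w * conj (blaschkeResidue μ v) * szegoKernel w μ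
        + blaschkeResidue μ w * conj (blaschkeFactor μ v) * szegoKernel μ v
        + blaschkeResidue μ w * conj (blaschkeResidue μ v) * szegoKernel μ μ) :=
    sum_congr rfl fun w hw => sum_congr rfl fun v hv => by
      rw [blaschke_szegoKernel_identity hμ (hP w hw) (hP v hv) (hne w hw) (hne v hv)]
  have hμval : blaschkeMul μ P a μ = A := Function.update_self ..
  rw [szegoGram_insert hμP, szegoGram_congr hval, hkernel]
  simp +contextual only [hval, hμval, mul_add, sum_add_distrib, hFF, hFR, hRF, hRR]
  ring

theorem norm_inv_blaschkeFactor (μ z : ℂ) : ‖(blaschkeFactor μ z)⁻¹‖ = pseudoHyp z μ := by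
  rw [blaschkeFactor, inv_div, pseudoHyp]

theorem exists_szegoGram_eq_prod_pseudoHyp {lam : ℂ} (hlam : ‖lam‖ < 1) (M : Finset ℂ)
    (hM : ∀ μ ∈ M, ‖μ‖ < 1) (hlamM : lam ∉ M) :
    ∃ a : ℂ → ℂ, a lam = 1 ∧ szegoGram (insert lam M) a
      = (((∏ μ ∈ M, pseudoHyp lam μ) ^ 2 / (1 - ‖lam‖ ^ 2) : ℝ) : ℂ) := by
  classical
  induction M using Finset.induction_on with
  | empty =>
    refine ⟨fun _ => 1, rfl, ?_⟩
    simp [szegoGram, szegoKernel, Complex.mul_conj']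
  | insert μ M hμM ih =>
    obtain ⟨a, ha_lam, ha⟩ := ih (fun w hw => hM w (mem_insert_of_mem hw))
      (fun h => hlamM (mem_insert_of_mem h))
    have hμ : ‖μ‖ < 1 := hM μ (mem_insert_self μ M)
    have hlamμ : lam ≠ μ := fun h => hlamM (h ▸ mem_insert_self μ M)
    have hb : blaschkeFactor μ lam ≠ 0 :=
      div_ne_zero (by rw [mul_comm]; exact one_sub_mul_conj_ne_zero hlam hμ) (sub_ne_zero.mpr hlamμ)
    have hP : ∀ w ∈ insert lam M, ‖w‖ < 1 := by
      simpa [hlam] using fun w hw => hM w (mem_insert_of_mem hw)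
    have hμP : μ ∉ insert lam M := by simp [hμM, hlamμ.symm]
    refine ⟨(blaschkeFactor μ lam)⁻¹ • blaschkeMul μ (insert lam M) a, ?_, ?_⟩
    · simp [blaschkeMul, Function.update_of_ne hlamμ, ha_lam, hb]
    · rw [insert_comm, szegoGram_smul, szegoGram_blaschkeMul hμ hP hμP, ha,
        norm_inv_blaschkeFactor, prod_insert hμM]
      push_cast
      ring

theorem exists_hasSum_norm_pow_sub_sum_sq {lam : ℂ} (hlam : ‖lam‖ < 1) (M : Finset ℂ)
    (hM : ∀ μ ∈ M, ‖μ‖ < 1) (hlamM : lam ∉ M) :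
    ∃ r : ℂ → ℂ, HasSum (fun N => ‖lam ^ N - ∑ μ ∈ M, r μ * μ ^ N‖ ^ 2)
      ((∏ μ ∈ M, pseudoHyp lam μ) ^ 2 / (1 - ‖lam‖ ^ 2)) := by
  obtain ⟨a, ha_lam, ha⟩ := exists_szegoGram_eq_prod_pseudoHyp hlam M hM hlamM
  have hP : ∀ w ∈ insert lam M, ‖w‖ < 1 := by simpa [hlam] using hM
  refine ⟨-a, ?_⟩
  have h := hasSum_norm_sq_sum_mul_pow (insert lam M) hP a
  rw [ha, Complex.ofReal_re] at h
  simpa [sum_insert hlamM, ha_lam, sub_eq_add_neg] using h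

theorem h2_matrix_approx_bound_general (p m n q : ℕ)
    (R : Fin n → Matrix (Fin p) (Fin m) ℂ) (lam : Fin n → ℂ) (μ : Fin q → ℂ)
    (hlam : ∀ j, ‖lam j‖ < 1) (hμ : ∀ k, ‖μ k‖ < 1)
    (hμ_inj : Function.Injective μ)
    (hne : ∀ j k, μ k ≠ lam j) :
    ∃ Rc : Fin q → Matrix (Fin p) (Fin m) ℂ,
      Real.sqrt (h2SqErrorMat p m n q R lam μ Rc)
        ≤ ∑ j, (‖R j‖ / Real.sqrt (1 - ‖lam j‖ ^ 2)) *
            ∏ k, pseudoHyp (lam j) (μ k) := by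
  classical
  set M := univ.image μ
  have hM : ∀ w ∈ M, ‖w‖ < 1 := by simpa [M] using hμ
  have hlamM : ∀ j, lam j ∉ M := by simpa [M] using hne
  choose r hr using fun j => exists_hasSum_norm_pow_sub_sum_sq (hlam j) M hM (hlamM j)
  set e : Fin n → ℕ → Matrix (Fin p) (Fin m) ℂ :=
    fun j N => (lam j ^ N - ∑ w ∈ M, r j w * w ^ N) • R j
  have herr : ∀ N, (∑ j, lam j ^ N • R j) - ∑ k, μ k ^ N • ∑ j, r j (μ k) • R j
      = ∑ j, e j N := by
    intro N
    simp only [e, M, sum_image hμ_inj.injOn, sub_smul, sum_smul, mul_smul, smul_sum,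
      sum_sub_distrib]
    rw [sum_comm (s := univ) (t := univ)]
    simp only [smul_comm (μ _ ^ N)]
  have he : ∀ j, HasSum (fun N => ‖e j N‖ ^ 2)
      ((∏ k, pseudoHyp (lam j) (μ k)) ^ 2 / (1 - ‖lam j‖ ^ 2) * ‖R j‖ ^ 2) := fun j => by
    simpa [e, norm_smul, mul_pow, M, prod_image hμ_inj.injOn] using (hr j).mul_right (‖R j‖ ^ 2)
  refine ⟨fun k => ∑ j, r j (μ k) • R j, ?_⟩
  calc √(h2SqErrorMat p m n q R lam μ _) = √(∑' N, ‖∑ j, e j N‖ ^ 2) := by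
        simp only [h2SqErrorMat, herr]
    _ ≤ ∑ j, √(∑' N, ‖e j N‖ ^ 2) := sqrt_tsum_norm_sum_sq_le _ e fun j => (he j).summable
    _ = _ := sum_congr rfl fun j _ => by
        have hP : 0 ≤ ∏ k, pseudoHyp (lam j) (μ k) := prod_nonneg fun k _ => norm_nonneg _
        rw [(he j).tsum_eq, Real.sqrt_mul' _ (sq_nonneg _), Real.sqrt_div (sq_nonneg _),
          Real.sqrt_sq hP, Real.sqrt_sq (norm_nonneg _)]
        ring

theorem h2_matrix_approx_bound (p m n q : ℕ) (hn : 1 ≤ n) (hq : 1 ≤ q)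
    (R : Fin n → Matrix (Fin p) (Fin m) ℂ) (lam : Fin n → ℂ) (μ : Fin q → ℂ)
    (hlam : ∀ j, ‖lam j‖ < 1) (hμ : ∀ k, ‖μ k‖ < 1)
    (hlam_inj : Function.Injective lam) (hμ_inj : Function.Injective μ)
    (hne : ∀ j k, μ k ≠ lam j) :
    ∃ Rc : Fin q → Matrix (Fin p) (Fin m) ℂ,
      Real.sqrt (h2SqErrorMat p m n q R lam μ Rc)
        ≤ ∑ j, (‖R j‖ / Real.sqrt (1 - ‖lam j‖ ^ 2)) *
            ∏ k, pseudoHyp (lam j) (μ k) :=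
  h2_matrix_approx_bound_general p m n q R lam μ hlam hμ hμ_inj hne
end
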